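/- arXiv:1001.3226 — 7 statements merged into one kernel-verified Lean document; each statement's English description precedes it below -/
import Mathlib

section
/- For all X_1, …, X_h ∈ R, g(μ(X_1, …, X_h)) equals the determinant of the h×h matrix whose i-th row is (f(X_i), X_i^q, X_i^{q^2}, …, X_i^{q^{h−1}}). -/
open Finset

noncomputable section

/-- The Moore determinant `μ(X₁, …, X_h) = det (Xᵢ^{q^{j-1}})`. -/
def moore (q : ℕ) {h : ℕ} {R : Type*} [CommRing R] (X : Fin h → R) : R :=
  Matrix.det (Matrix.of fun i j : Fin h => X i ^ q ^ (j : ℕ))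

/-- `f(X) = πX + u₁X^q + ⋯ + u_{h−1}X^{q^{h−1}} + X^{q^h}`. -/
def fmap (q h : ℕ) {R : Type*} [CommRing R] (π : R) (u : ℕ → R) (X : R) : R :=
  π * X + (∑ k ∈ Finset.Ico 1 h, u k * X ^ q ^ k) + X ^ q ^ h

/-- `g(T) = πT + (−1)^{h−1}T^q`. -/
def gmap (q h : ℕ) {R : Type*} [CommRing R] (π : R) (T : R) : R :=
  π * T + (-1) ^ (h - 1) * T ^ q

/-! The determinant is linear in its first column, so it splits along the three kinds of terms of
`f(Xᵢ)`. The column `π Xᵢ` gives `π μ`; each column `uₖ Xᵢ^{q^k}` with `1 ≤ k < h` is a multiple of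
another column of the Moore matrix and contributes nothing; and the column `Xᵢ^{q^h}`, cycled to the
last position at the cost of the sign `(-1)^{h-1}`, gives the Moore determinant of the `Xᵢ^q`. The
latter is `μ^q` because `x ↦ x^q` is a ring endomorphism of any `F_q`-algebra. -/

section Moore

variable {R : Type*} [CommRing R] (q : ℕ) {h : ℕ}

def mooreMatrix (X : Fin h → R) : Matrix (Fin h) (Fin h) R :=
  Matrix.of fun i j => X i ^ q ^ (j : ℕ)

theorem moore_eq_det_mooreMatrix (X : Fin h → R) : moore q X = (mooreMatrix q X).det := rfl

theorem RingHom.map_moore {S : Type*} [CommRing S] (φ : R →+* S) (X : Fin h → R) :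
    φ (moore q X) = moore q (φ ∘ X) := by
  simp only [moore, RingHom.map_det, RingHom.mapMatrix_apply]
  congr 1
  ext i j
  simp

theorem mooreMatrix_pow_apply (X : Fin h → R) (i j : Fin h) :
    mooreMatrix q (fun i => X i ^ q) i j = X i ^ q ^ ((j : ℕ) + 1) := by
  simp [mooreMatrix, ← pow_mul, pow_succ']

theorem det_updateCol_zero_mooreMatrix_pow_succ (n : ℕ) (X : Fin (n + 1) → R) :
    ((mooreMatrix q X).updateCol 0 fun i => X i ^ q ^ (n + 1)).det
      = (-1) ^ n * moore q (fun i => X i ^ q) := by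
  have hrot : mooreMatrix q (fun i => X i ^ q)
      = ((mooreMatrix q X).updateCol 0 fun i => X i ^ q ^ (n + 1)).submatrix id
          (finRotate (n + 1)) := by
    ext i j
    rw [mooreMatrix_pow_apply]
    induction j using Fin.lastCases with
    | last => simp
    | cast k => simp [mooreMatrix]
  rw [moore_eq_det_mooreMatrix, hrot, Matrix.det_permute', sign_finRotate]
  simp [← mul_assoc, ← pow_add, ← two_mul, pow_mul]

theorem fmap_eq_sum_add (hh : 1 ≤ h) (π : R) (u : ℕ → R) (x : R) :
    fmap q h π u x
      = ∑ j : Fin h, (if (j : ℕ) = 0 then π else u j) * x ^ q ^ (j : ℕ) + x ^ q ^ h := by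
  rw [Fin.sum_univ_eq_sum_range (fun k => (if k = 0 then π else u k) * x ^ q ^ k),
    Finset.sum_range_eq_add_Ico _ hh, fmap]
  congr 2
  · simp
  · refine Finset.sum_congr rfl fun k hk => ?_
    simp [Nat.one_le_iff_ne_zero.mp (Finset.mem_Ico.mp hk).1]

theorem det_updateCol_zero_mooreMatrix_fmap (n : ℕ) (π : R) (u : ℕ → R) (X : Fin (n + 1) → R) :
    ((mooreMatrix q X).updateCol 0 fun i => fmap q (n + 1) π u (X i)).det
      = π * moore q X + (-1) ^ n * moore q (fun i => X i ^ q) := by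
  have hcol : (fun i => fmap q (n + 1) π u (X i))
      = (fun i => ∑ j : Fin (n + 1), (if (j : ℕ) = 0 then π else u j) • mooreMatrix q X i j)
        + fun i => X i ^ q ^ (n + 1) := by
    ext i
    simp [fmap_eq_sum_add q le_add_self, mooreMatrix]
  rw [hcol, Matrix.det_updateCol_add, Matrix.det_updateCol_sum,
    det_updateCol_zero_mooreMatrix_pow_succ]
  simp [moore_eq_det_mooreMatrix]

end Moore

theorem gmap_moore_eq_det_general
    (q h : ℕ) (hh : 1 ≤ h)
    (K : Type*) [Field K] [Fintype K] (hK : Fintype.card K = q)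
    (R : Type*) [CommRing R] [Algebra K R]
    (π : R) (u : ℕ → R) (X : Fin h → R) :
    gmap q h π (moore q X)
      = Matrix.det (Matrix.of fun i j : Fin h =>
          if (j : ℕ) = 0 then fmap q h π u (X i) else X i ^ q ^ (j : ℕ)) := by
  obtain ⟨n, rfl⟩ : ∃ n, h = n + 1 := ⟨h - 1, by omega⟩
  have hfrob : moore q X ^ q = moore q (fun i => X i ^ q) := by
    subst hK
    exact (FiniteField.frobeniusAlgHom K R : R →+* R).map_moore _ X
  have hmat : (Matrix.of fun i j : Fin (n + 1) =>
      if (j : ℕ) = 0 then fmap q (n + 1) π u (X i) else X i ^ q ^ (j : ℕ))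
      = (mooreMatrix q X).updateCol 0 fun i => fmap q (n + 1) π u (X i) := by
    ext i j
    rw [Matrix.updateCol_apply, Matrix.of_apply]
    simp only [Fin.ext_iff, Fin.val_zero]
    rfl
  rw [hmat, det_updateCol_zero_mooreMatrix_fmap, gmap, hfrob, Nat.add_sub_cancel]

/-- For all `X₁, …, X_h ∈ R`, `g(μ(X₁, …, X_h))` equals the determinant of the `h×h`
matrix whose `i`-th row is `(f(Xᵢ), Xᵢ^q, Xᵢ^{q²}, …, Xᵢ^{q^{h−1}})`. -/
theorem gmap_moore_eq_det
    (p e q h : ℕ) (hp : p.Prime) (he : 1 ≤ e) (hq : q = p ^ e) (hh : 1 ≤ h)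
    (K : Type*) [Field K] [Fintype K] [DecidableEq K] (hK : Fintype.card K = q)
    (R : Type*) [CommRing R] [Algebra K R]
    (π : R) (u : ℕ → R) (X : Fin h → R) :
    gmap q h π (moore q X)
      = Matrix.det (Matrix.of fun i j : Fin h =>
          if (j : ℕ) = 0 then fmap q h π u (X i) else X i ^ q ^ (j : ℕ)) :=
  gmap_moore_eq_det_general q h hh K hK R π u X
end
end

section
/- For every n ≥ 1, the map (X_1, …, X_h) ↦ μ_n(X_1, …, X_h) is F_q-multilinear and alternating: for each index i, each c ∈ F_q ⊆ R, and all elements of R, μ_n(X_1, …, cX_i + X_i', …, X_h) = c·μ_n(X_1, …, X_i, …, X_h) + μ_n(X_1, …, X_i', …, X_h); and μ_n(X_1, …, X_h) = 0 whenever X_i = X_j for some i ≠ j. -/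
open Finset

noncomputable section

/-- `μ_n(X₁, …, X_h) = Σ μ(f^(a₁)(X₁), …, f^(a_h)(X_h))`, the sum over all tuples
`(a₁, …, a_h)` with `0 ≤ aᵢ ≤ n−1` and `a₁ + ⋯ + a_h = (h−1)(n−1)`. -/
def mooreN (q h n : ℕ) {R : Type*} [CommRing R] (π : R) (u : ℕ → R) (X : Fin h → R) : R :=
  ∑ a ∈ Finset.univ.filter
      (fun a : Fin h → Fin n => ∑ i, (a i : ℕ) = (h - 1) * (n - 1)),
    moore q (fun i => (fmap q h π u)^[(a i : ℕ)] (X i))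

section Aux

variable {p e q : ℕ} (hp : p.Prime) (hq : q = p ^ e)
variable {K : Type*} [Field K] [Fintype K] (hK : Fintype.card K = q)
variable {R : Type*} [CommRing R] [Algebra K R] [CharP R p]

include hp hq hK in
lemma charK (he : 1 ≤ e) : CharP K p := by
  have h0 : ((p : K)) ^ e = 0 := by
    have := Nat.cast_card_eq_zero K
    rw [hK, hq] at this
    exact_mod_cast this
  have hp0 : (p : K) = 0 := pow_eq_zero_iff (by omega) |>.mp h0
  have h1 : ringChar K ∣ p := (ringChar.dvd hp0)
  have hchar : ringChar K = p := by
    rcases (Nat.Prime.eq_one_or_self_of_dvd hp _ h1) with h | h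
    · exact absurd h (CharP.ringChar_ne_one)
    · exact h
  exact hchar ▸ ringChar.charP K

include hp hq in
lemma qpow_add (x y : R) (m : ℕ) : (x + y) ^ q ^ m = x ^ q ^ m + y ^ q ^ m := by
  haveI : Fact p.Prime := ⟨hp⟩
  subst hq
  rw [← pow_mul, add_pow_char_pow, pow_mul]

include hp hq hK in
lemma pow_const (c : K) (m : ℕ) :
    (algebraMap K R c) ^ q ^ m = algebraMap K R c := by
  rw [← map_pow]
  congr 1
  induction m with
  | zero => simp
  | succ m ih => rw [pow_succ, pow_mul, ih, ← hK, FiniteField.pow_card]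

include hp hq hK in
lemma pow_semilinear (c : K) (x x' : R) (m : ℕ) :
    (algebraMap K R c * x + x') ^ q ^ m
      = algebraMap K R c * x ^ q ^ m + x' ^ q ^ m := by
  rw [qpow_add hp hq, mul_pow, pow_const hp hq hK]

include hp hq hK in
lemma fmap_semilinear (h : ℕ) (π : R) (u : ℕ → R) (c : K) (x x' : R) :
    fmap q h π u (algebraMap K R c * x + x')
      = algebraMap K R c * fmap q h π u x + fmap q h π u x' := by
  have hsum : ∑ k ∈ Finset.Ico 1 h, u k * (algebraMap K R c * x ^ q ^ k + x' ^ q ^ k)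
      = algebraMap K R c * ∑ k ∈ Finset.Ico 1 h, u k * x ^ q ^ k
        + ∑ k ∈ Finset.Ico 1 h, u k * x' ^ q ^ k := by
    rw [Finset.mul_sum, ← Finset.sum_add_distrib]
    exact Finset.sum_congr rfl fun k _ => by ring
  simp only [fmap, pow_semilinear hp hq hK]
  rw [hsum]
  ring

include hp hq hK in
lemma fmap_iter_semilinear (h : ℕ) (π : R) (u : ℕ → R) (c : K) (x x' : R) (m : ℕ) :
    (fmap q h π u)^[m] (algebraMap K R c * x + x')
      = algebraMap K R c * (fmap q h π u)^[m] x + (fmap q h π u)^[m] x' := by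
  induction m with
  | zero => simp
  | succ m ih =>
      rw [Function.iterate_succ_apply', ih, fmap_semilinear hp hq hK,
        Function.iterate_succ_apply', Function.iterate_succ_apply']

include hp hq hK in
lemma moore_semilinear {h : ℕ} (Y : Fin h → R) (i : Fin h) (c : K) (y y' : R) :
    moore q (Function.update Y i (algebraMap K R c * y + y'))
      = algebraMap K R c * moore q (Function.update Y i y)
        + moore q (Function.update Y i y') := by
  have key : ∀ v : R, Matrix.of (fun i' j : Fin h => (Function.update Y i v) i' ^ q ^ (j : ℕ))
      = Matrix.updateRow (Matrix.of fun i' j : Fin h => Y i' ^ q ^ (j : ℕ)) i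
        (fun j : Fin h => v ^ q ^ (j : ℕ)) := by
    intro v
    ext i' j
    by_cases hii : i' = i
    · subst hii; simp
    · simp [Matrix.updateRow_ne hii, Function.update_of_ne hii]
  simp only [moore, key]
  have hrow : (fun j : Fin h => (algebraMap K R c * y + y') ^ q ^ (j : ℕ))
      = (algebraMap K R c) • (fun j : Fin h => y ^ q ^ (j : ℕ))
        + (fun j : Fin h => y' ^ q ^ (j : ℕ)) := by
    funext j
    rw [Pi.add_apply, Pi.smul_apply, smul_eq_mul, pow_semilinear hp hq hK]
  rw [hrow, Matrix.det_updateRow_add, Matrix.det_updateRow_smul]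

end Aux

/-- For every `n ≥ 1`, `μ_n` is `F_q`-multilinear and alternating. -/
theorem mooreN_multilinear_alternating
    (p e q h n : ℕ) (hp : p.Prime) (he : 1 ≤ e) (hq : q = p ^ e) (hh : 1 ≤ h) (hn : 1 ≤ n)
    (K : Type*) [Field K] [Fintype K] [DecidableEq K] (hK : Fintype.card K = q)
    (R : Type*) [CommRing R] [Algebra K R]
    (π : R) (u : ℕ → R) :
    (∀ (X : Fin h → R) (i : Fin h) (c : K) (X' : R),
        mooreN q h n π u (Function.update X i (algebraMap K R c * X i + X'))
          = algebraMap K R c * mooreN q h n π u X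
            + mooreN q h n π u (Function.update X i X'))
    ∧
    (∀ (X : Fin h → R) (i j : Fin h), i ≠ j → X i = X j → mooreN q h n π u X = 0) := by
  constructor
  · rcases subsingleton_or_nontrivial R with hR | hR
    · intro X i c X'
      exact Subsingleton.elim _ _
    haveI : CharP K p := charK hp hq hK he
    haveI : CharP R p := charP_of_injective_algebraMap (algebraMap K R).injective p
    intro X i c X'
    unfold mooreN
    rw [Finset.mul_sum, ← Finset.sum_add_distrib]
    apply Finset.sum_congr rfl
    intro a _
    have hfun : ∀ w : R, (fun k : Fin h => (fmap q h π u)^[((a k : ℕ))]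
          ((Function.update X i w) k))
        = Function.update (fun k : Fin h => (fmap q h π u)^[((a k : ℕ))] (X k)) i
          ((fmap q h π u)^[((a i : ℕ))] w) := by
      intro w
      funext k
      by_cases hk : k = i
      · subst hk; simp
      · simp [Function.update_of_ne hk]
    rw [hfun, hfun]
    set Y := fun k : Fin h => (fmap q h π u)^[((a k : ℕ))] (X k) with hY
    rw [fmap_iter_semilinear hp hq hK]
    have hYi : (fmap q h π u)^[((a i : ℕ))] (X i) = Y i := rfl
    rw [hYi]
    have := moore_semilinear hp hq hK Y i c (Y i) ((fmap q h π u)^[((a i : ℕ))] X')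
    rwa [Function.update_eq_self] at this
  · intro X i j hij hXij
    unfold mooreN
    set σ := Equiv.swap i j with hσ
    have hXσ : ∀ k, X (σ k) = X k := by
      intro k
      rcases eq_or_ne k i with rfl | hki
      · simp [hσ, Equiv.swap_apply_left, hXij]
      rcases eq_or_ne k j with rfl | hkj
      · simp [hσ, Equiv.swap_apply_right, hXij]
      · rw [hσ, Equiv.swap_apply_of_ne_of_ne hki hkj]
    apply Finset.sum_involution (fun a _ => a ∘ σ)
    · intro a _
      have : moore q (fun k => (fmap q h π u)^[(((a ∘ σ) k : ℕ))] (X k))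
          = - moore q (fun k => (fmap q h π u)^[((a k : ℕ))] (X k)) := by
        have hfun : (fun k : Fin h => (fmap q h π u)^[(((a ∘ σ) k : ℕ))] (X k))
            = fun k : Fin h => (fun k' => (fmap q h π u)^[((a k' : ℕ))] (X k')) (σ k) := by
          funext k
          simp [Function.comp, hXσ k]
        rw [hfun]
        unfold moore
        have hdp := Matrix.det_permute σ
          (Matrix.of fun i' j' : Fin h => ((fmap q h π u)^[((a i' : ℕ))] (X i')) ^ q ^ (j' : ℕ))
        rw [show (Matrix.of fun k j' : Fin h =>
            ((fun k' => (fmap q h π u)^[((a k' : ℕ))] (X k')) (σ k)) ^ q ^ (j' : ℕ))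
          = (Matrix.of fun i' j' : Fin h =>
            ((fmap q h π u)^[((a i' : ℕ))] (X i')) ^ q ^ (j' : ℕ)).submatrix σ id from rfl,
          hdp, hσ, Equiv.Perm.sign_swap hij]
        simp
      rw [this]
      ring
    · intro a _ hfa
      intro hcon
      apply hfa
      have haij : a i = a j := by
        have := congrFun hcon j
        simpa [hσ, Equiv.swap_apply_right, Function.comp] using this
      apply Matrix.det_zero_of_row_eq hij
      funext j'
      simp [Matrix.of_apply, haij, hXij]
    · intro a ha
      simp only [Finset.mem_filter, Finset.mem_univ, true_and] at ha
      rw [Finset.mem_filter]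
      refine ⟨Finset.mem_univ _, ?_⟩
      rw [← ha]
      exact Fintype.sum_equiv σ (fun k => ((((a ∘ σ) k : Fin n)) : ℕ)) (fun k => ((a k : ℕ)))
        (fun k => rfl)
    · intro a _
      funext k
      simp [Function.comp, hσ, Equiv.swap_apply_self]
end
end

section
/- Let n ≥ 1 and suppose X_1, …, X_h ∈ R satisfy f^{(n)}(X_i) = 0 for all i. Then g^{(n)}(μ_n(X_1, …, X_h)) = 0. -/
open Finset

noncomputable section

/-!
Let `σ` be the `q`-power Frobenius of `R`, extended coefficientwise to `R[t]`. Because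
`f^(n)(Xᵢ) = 0`, the generating polynomials `Pᵢ = ∑_{a<n} f^(a)(Xᵢ) tᵃ` satisfy `Pᵢ = Xᵢ + t f(Pᵢ)`.
Expand the Moore determinant `D = μ(P₁, …, P_h)` along its first column `Xᵢ + t f(Pᵢ)`: the terms
`uₖ σᵏ Pᵢ` with `0 < k < h` repeat a column, and `σʰ Pᵢ` gives a cyclic shift of the columns of
`σ(D)`, so `D = N + t g(D)` with `deg N ≤ (h-1)(n-1)`. Above degree `(h-1)(n-1)` the coefficients
of `D` thus obey `D_{c+1} = g(D_c)`, whence `g^(n)(D_{(h-1)(n-1)}) = D_{(h-1)(n-1)+n} = 0` as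
`deg D ≤ h(n-1)`; and `D_{(h-1)(n-1)} = μ_n` by multilinearity of the determinant in the rows.
Only the fact that `σ` is a ring endomorphism is used, so all of this holds with an arbitrary
ring endomorphism `σ` in place of the Frobenius.
-/

open Matrix

section Twisted

variable {S : Type*} [CommRing S] (σ : S →+* S)

def twistedMooreMatrix {h : ℕ} (v : Fin h → S) : Matrix (Fin h) (Fin h) S :=
  of fun i j => σ^[j] (v i)

def twistedMoore {h : ℕ} (v : Fin h → S) : S := (twistedMooreMatrix σ v).det

def twistedFmap (h : ℕ) (π : S) (u : ℕ → S) (x : S) : S :=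
  π * x + (∑ k ∈ Ico 1 h, u k * σ^[k] x) + σ^[h] x

def twistedGmap (h : ℕ) (π : S) (x : S) : S :=
  π * x + (-1) ^ (h - 1) * σ x

theorem twistedFmap_zero (h : ℕ) (π : S) (u : ℕ → S) : twistedFmap σ h π u 0 = 0 := by
  simp [twistedFmap, iterate_map_zero]

variable {m : ℕ}

theorem updateCol_twistedMooreMatrix_zero_iterate (v : Fin (m + 1) → S) :
    (twistedMooreMatrix σ v).updateCol 0 (fun i => σ^[m + 1] (v i)) =
      ((twistedMooreMatrix σ v).map σ).submatrix id (finRotate (m + 1)).symm := by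
  ext i j
  induction j using Fin.cases with
  | zero =>
    rw [updateCol_self, submatrix_apply, (finRotate (m + 1)).symm_apply_eq.mpr finRotate_last.symm]
    simp [twistedMooreMatrix, Function.iterate_succ_apply']
  | succ k =>
    rw [updateCol_ne (Fin.succ_ne_zero k), submatrix_apply,
      (finRotate (m + 1)).symm_apply_eq.mpr (by simp : k.succ = finRotate _ k.castSucc)]
    simp [twistedMooreMatrix, Function.iterate_succ_apply']

theorem det_updateCol_twistedMooreMatrix_zero_iterate (v : Fin (m + 1) → S) :
    ((twistedMooreMatrix σ v).updateCol 0 (fun i => σ^[m + 1] (v i))).det =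
      (-1) ^ m * σ (twistedMoore σ v) := by
  rw [updateCol_twistedMooreMatrix_zero_iterate, det_permute', Equiv.Perm.sign_symm,
    sign_finRotate, twistedMoore, RingHom.map_det, RingHom.mapMatrix_apply]
  simp

theorem mul_add_sum_Ico_iterate_eq_sum_fin (π : S) (u : ℕ → S) (x : S) :
    π * x + ∑ k ∈ Ico 1 (m + 1), u k * σ^[k] x =
      ∑ k : Fin (m + 1), (if (k : ℕ) = 0 then π else u k) * σ^[k] x := by
  rw [Fin.sum_univ_eq_sum_range (fun k => (if k = 0 then π else u k) * σ^[k] x), range_eq_Ico,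
    sum_eq_sum_Ico_succ_bot (Nat.succ_pos m)]
  simp only [if_pos, Function.iterate_zero, id_eq, zero_add]
  congr 1
  exact sum_congr rfl fun k hk => by rw [if_neg (by grind)]

theorem det_updateCol_twistedMooreMatrix_zero_twistedFmap (π : S) (u : ℕ → S)
    (v : Fin (m + 1) → S) :
    ((twistedMooreMatrix σ v).updateCol 0 (fun i => twistedFmap σ (m + 1) π u (v i))).det =
      twistedGmap σ (m + 1) π (twistedMoore σ v) := by
  have hcol : (fun i => twistedFmap σ (m + 1) π u (v i)) =
      (fun i => ∑ k : Fin (m + 1), (if (k : ℕ) = 0 then π else u k) • twistedMooreMatrix σ v i k) +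
        fun i => σ^[m + 1] (v i) := by
    ext i
    simp [twistedFmap, twistedMooreMatrix, mul_add_sum_Ico_iterate_eq_sum_fin]
  rw [hcol, det_updateCol_add, det_updateCol_sum, det_updateCol_twistedMooreMatrix_zero_iterate]
  simp [twistedGmap, twistedMoore]

theorem twistedMoore_eq_of_eq_add_mul {π t : S} {u : ℕ → S} {v a : Fin (m + 1) → S}
    (hv : ∀ i, v i = a i + t * twistedFmap σ (m + 1) π u (v i)) :
    twistedMoore σ v = ((twistedMooreMatrix σ v).updateCol 0 a).det +
      t * twistedGmap σ (m + 1) π (twistedMoore σ v) := by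
  have hcol : (fun i => twistedMooreMatrix σ v i 0) =
      a + t • fun i => twistedFmap σ (m + 1) π u (v i) := by
    ext i
    simpa [twistedMooreMatrix] using hv i
  conv_lhs => rw [twistedMoore, ← updateCol_eq_self (twistedMooreMatrix σ v) 0, hcol]
  rw [det_updateCol_add, det_updateCol_smul, det_updateCol_twistedMooreMatrix_zero_twistedFmap]

end Twisted

namespace Polynomial

variable {R : Type*} [CommRing R]

theorem natDegree_det_le_sum {ι : Type*} [Fintype ι] [DecidableEq ι] (A : Matrix ι ι R[X])
    (b : ι → ℕ) (hA : ∀ i j, (A i j).natDegree ≤ b j) : A.det.natDegree ≤ ∑ j, b j := by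
  rw [det_apply]
  refine natDegree_sum_le_of_forall_le _ _ fun σ _ => ?_
  refine (natDegree_smul_le _ _).trans <| (natDegree_prod_le _ _).trans ?_
  exact sum_le_sum fun j _ => hA (σ j) j

theorem coeff_det_eq_sum_det_coeff {ι : Type*} [Fintype ι] [DecidableEq ι] {n : ℕ}
    (A : Matrix ι ι R[X]) (hA : ∀ i j, (A i j).natDegree < n) (s : ℕ) :
    A.det.coeff s = ∑ r ∈ univ.filter (fun r : ι → Fin n => ∑ i, (r i : ℕ) = s),
      (of fun i j => (A i j).coeff (r i)).det := by
  have hrows :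
      A = of fun i => ∑ a : Fin n, (X ^ (a : ℕ) : R[X]) • fun j => C ((A i j).coeff a) := by
    refine Matrix.ext fun i j => ?_
    rw [as_sum_range_C_mul_X_pow' _ (hA i j), ← Fin.sum_univ_eq_sum_range]
    simp only [of_apply, Finset.sum_apply, Pi.smul_apply, smul_eq_mul]
    exact sum_congr rfl fun a _ => mul_comm _ ((X : R[X]) ^ (a : ℕ))
  have hdet : A.det = ∑ r : ι → Fin n,
      X ^ (∑ i, (r i : ℕ)) * C (of fun i j => (A i j).coeff (r i)).det := by
    conv_lhs => rw [hrows]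
    refine ((detRowAlternating (R := R[X]) (n := ι)).toMultilinearMap.map_sum
      fun i (a : Fin n) => (X ^ (a : ℕ) : R[X]) • fun j => C ((A i j).coeff a)).trans ?_
    refine sum_congr rfl fun r _ => ?_
    rw [MultilinearMap.map_smul_univ, prod_pow_eq_pow_sum, smul_eq_mul, RingHom.map_det]
    rfl
  rw [hdet, finsetSum_coeff, sum_filter]
  refine sum_congr rfl fun r _ => ?_
  rw [coeff_X_pow_mul', coeff_C]
  grind

theorem iterate_map (φ : R →+* R) (k : ℕ) (P : R[X]) : (map φ)^[k] P = P.map (φ ^ k) := by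
  induction k with
  | zero => rw [pow_zero, RingHom.one_def, map_id, Function.iterate_zero, id_eq]
  | succ k ih =>
    rw [Function.iterate_succ_apply', ih, map_map, pow_succ', RingHom.mul_def]

theorem coeff_add_eq_iterate {D N E : R[X]} {g : R → R} (hD : D = N + X * E)
    (hE : ∀ c, E.coeff c = g (D.coeff c)) {d : ℕ} (hN : N.natDegree ≤ d) (k : ℕ) :
    D.coeff (d + k) = g^[k] (D.coeff d) := by
  induction k with
  | zero => rfl
  | succ k ih =>
    conv_lhs => rw [hD]
    rw [← add_assoc, coeff_add, coeff_X_mul, hE, ih, Function.iterate_succ_apply',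
      coeff_eq_zero_of_natDegree_lt (by omega), zero_add]

end Polynomial

section Generating

open Polynomial

variable {R : Type*} [CommRing R]

def iteratePoly (f : R → R) (n : ℕ) (x : R) : R[X] :=
  ∑ a ∈ range n, C (f^[a] x) * X ^ a

theorem coeff_iteratePoly (f : R → R) (n : ℕ) (x : R) (c : ℕ) :
    (iteratePoly f n x).coeff c = if c < n then f^[c] x else 0 := by
  simp [iteratePoly, finsetSum_coeff]

theorem natDegree_iteratePoly_le (f : R → R) (n : ℕ) (x : R) :
    (iteratePoly f n x).natDegree ≤ n - 1 := by
  refine natDegree_sum_le_of_forall_le _ _ fun a ha => (natDegree_C_mul_X_pow_le _ _).trans ?_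
  have := mem_range.mp ha
  omega

theorem iteratePoly_eq_C_add_X_mul {f : R → R} {F : R[X] → R[X]}
    (hF : ∀ P c, (F P).coeff c = f (P.coeff c)) (hf : f 0 = 0) {n : ℕ} {x : R}
    (hx : f^[n] x = 0) : iteratePoly f n x = C x + X * F (iteratePoly f n x) := by
  ext c
  cases c with
  | zero => cases n <;> simp_all [coeff_iteratePoly]
  | succ c =>
    rw [coeff_add, coeff_C_succ, coeff_X_mul, hF, coeff_iteratePoly, coeff_iteratePoly, zero_add]
    rcases lt_trichotomy (c + 1) n with hc | rfl | hc
    · rw [if_pos hc, if_pos (by omega), Function.iterate_succ_apply']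
    · rw [if_neg (lt_irrefl _), if_pos (lt_add_one c), ← Function.iterate_succ_apply' f, hx]
    · rw [if_neg (by omega), if_neg (by omega), hf]

variable (φ : R →+* R)

def twistedMooreN (h n : ℕ) (π : R) (u : ℕ → R) (x : Fin h → R) : R :=
  ∑ a ∈ univ.filter (fun a : Fin h → Fin n => ∑ i, (a i : ℕ) = (h - 1) * (n - 1)),
    twistedMoore φ (fun i => (twistedFmap φ h π u)^[(a i : ℕ)] (x i))

theorem coeff_twistedFmap_mapRingHom (h : ℕ) (π : R) (u : ℕ → R) (P : R[X]) (c : ℕ) :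
    (twistedFmap (mapRingHom φ) h (C π) (fun k => C (u k)) P).coeff c =
      twistedFmap φ h π u (P.coeff c) := by
  simp only [twistedFmap, coe_mapRingHom, iterate_map, coeff_add, coeff_C_mul, finsetSum_coeff,
    coeff_map, RingHom.coe_pow]

theorem coeff_twistedGmap_mapRingHom (h : ℕ) (π : R) (P : R[X]) (c : ℕ) :
    (twistedGmap (mapRingHom φ) h (C π) P).coeff c = twistedGmap φ h π (P.coeff c) := by
  rw [twistedGmap, twistedGmap, ← C_1, ← C_neg, ← C_pow, coeff_add, coeff_C_mul, coeff_C_mul,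
    coe_mapRingHom, coeff_map]

theorem natDegree_twistedMooreMatrix_iteratePoly_le (f : R → R) {h : ℕ} (n : ℕ)
    (x : Fin h → R) (i j : Fin h) :
    (twistedMooreMatrix (mapRingHom φ) (fun i => iteratePoly f n (x i)) i j).natDegree ≤ n - 1 :=
  show ((mapRingHom φ)^[j] _).natDegree ≤ _ by
    rw [coe_mapRingHom, iterate_map]
    exact natDegree_map_le.trans (natDegree_iteratePoly_le f n (x i))

theorem coeff_twistedMoore_iteratePoly (f : R → R) {h n : ℕ} (hn : 1 ≤ n) (x : Fin h → R)
    (s : ℕ) :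
    (twistedMoore (mapRingHom φ) (fun i => iteratePoly f n (x i))).coeff s =
      ∑ a ∈ univ.filter (fun a : Fin h → Fin n => ∑ i, (a i : ℕ) = s),
        twistedMoore φ (fun i => f^[(a i : ℕ)] (x i)) := by
  rw [twistedMoore, coeff_det_eq_sum_det_coeff (n := n) _ fun i j => by
    have := natDegree_twistedMooreMatrix_iteratePoly_le φ f n x i j
    omega]
  refine sum_congr rfl fun a _ => congrArg det (Matrix.ext fun i j => ?_)
  simp only [twistedMooreMatrix, of_apply, coe_mapRingHom, iterate_map, coeff_map,
    coeff_iteratePoly, if_pos (a i).isLt, RingHom.coe_pow]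

end Generating

open Polynomial in
theorem twistedGmap_iterate_twistedMooreN_eq_zero {R : Type*} [CommRing R] (φ : R →+* R)
    {m n : ℕ} (hn : 1 ≤ n) (π : R) (u : ℕ → R) (x : Fin (m + 1) → R)
    (hx : ∀ i, (twistedFmap φ (m + 1) π u)^[n] (x i) = 0) :
    (twistedGmap φ (m + 1) π)^[n] (twistedMooreN φ (m + 1) n π u x) = 0 := by
  set f := twistedFmap φ (m + 1) π u
  set P := fun i => iteratePoly f n (x i)
  set M := twistedMooreMatrix (mapRingHom φ) P
  have hP : ∀ i,
      P i = C (x i) + X * twistedFmap (mapRingHom φ) (m + 1) (C π) (fun k => C (u k)) (P i) :=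
    fun i => iteratePoly_eq_C_add_X_mul (coeff_twistedFmap_mapRingHom φ (m + 1) π u)
      (twistedFmap_zero φ (m + 1) π u) (hx i)
  have hN : (M.updateCol 0 fun i => C (x i)).det.natDegree ≤ m * (n - 1) := by
    refine (natDegree_det_le_sum _ (fun j => if j = 0 then 0 else n - 1) fun i j => ?_).trans_eq ?_
    · rcases eq_or_ne j 0 with rfl | hj
      · simp
      · simpa [hj] using natDegree_twistedMooreMatrix_iteratePoly_le φ f n x i j
    · simp [Fin.sum_univ_succ, Fin.succ_ne_zero]
  have hiter := coeff_add_eq_iterate (twistedMoore_eq_of_eq_add_mul _ hP)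
    (coeff_twistedGmap_mapRingHom φ (m + 1) π _) hN n
  have htop : (twistedMoore (mapRingHom φ) P).coeff (m * (n - 1) + n) = 0 := by
    refine coeff_eq_zero_of_natDegree_lt <| (natDegree_det_le_sum M (fun _ => n - 1)
      (natDegree_twistedMooreMatrix_iteratePoly_le φ f n x)).trans_lt ?_
    simp only [sum_const, card_univ, Fintype.card_fin, smul_eq_mul, add_one_mul]
    omega
  rw [← htop, hiter, coeff_twistedMoore_iteratePoly φ f hn, twistedMooreN, Nat.add_sub_cancel]

section Frobenius

open FiniteField

variable (K : Type*) [Field K] [Fintype K] {R : Type*} [CommRing R] [Algebra K R]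

theorem iterate_frobeniusAlgHom (k : ℕ) (x : R) :
    (frobeniusAlgHom K R : R →+* R)^[k] x = x ^ Fintype.card K ^ k := by
  rw [AlgHom.coe_toRingHom, coe_frobeniusAlgHom, pow_iterate]

theorem twistedFmap_frobeniusAlgHom (h : ℕ) (π : R) (u : ℕ → R) :
    twistedFmap (frobeniusAlgHom K R : R →+* R) h π u = fmap (Fintype.card K) h π u := by
  ext x
  simp only [twistedFmap, fmap, iterate_frobeniusAlgHom]

theorem twistedGmap_frobeniusAlgHom (h : ℕ) (π : R) :
    twistedGmap (frobeniusAlgHom K R : R →+* R) h π = gmap (Fintype.card K) h π := by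
  ext x
  rw [twistedGmap, gmap, AlgHom.coe_toRingHom, coe_frobeniusAlgHom]

theorem twistedMooreN_frobeniusAlgHom (h n : ℕ) (π : R) (u : ℕ → R) (X : Fin h → R) :
    twistedMooreN (frobeniusAlgHom K R : R →+* R) h n π u X =
      mooreN (Fintype.card K) h n π u X := by
  simp only [twistedMooreN, mooreN, moore, twistedMoore, twistedMooreMatrix,
    iterate_frobeniusAlgHom, twistedFmap_frobeniusAlgHom]

end Frobenius

theorem gmap_iterate_mooreN_eq_zero_general
    (q h n : ℕ) (hh : 1 ≤ h) (hn : 1 ≤ n)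
    (K : Type*) [Field K] [Fintype K] (hK : Fintype.card K = q)
    (R : Type*) [CommRing R] [Algebra K R]
    (π : R) (u : ℕ → R) (X : Fin h → R)
    (hX : ∀ i, (fmap q h π u)^[n] (X i) = 0) :
    (gmap q h π)^[n] (mooreN q h n π u X) = 0 := by
  obtain ⟨m, rfl⟩ : ∃ m, h = m + 1 := ⟨h - 1, by omega⟩
  subst hK
  rw [← twistedFmap_frobeniusAlgHom] at hX
  rw [← twistedGmap_frobeniusAlgHom, ← twistedMooreN_frobeniusAlgHom]
  exact twistedGmap_iterate_twistedMooreN_eq_zero _ hn π u X hX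

/-- Let `n ≥ 1` and suppose `f^(n)(Xᵢ) = 0` for all `i`. Then `g^(n)(μ_n(X₁, …, X_h)) = 0`. -/
theorem gmap_iterate_mooreN_eq_zero
    (p e q h n : ℕ) (hp : p.Prime) (he : 1 ≤ e) (hq : q = p ^ e) (hh : 1 ≤ h) (hn : 1 ≤ n)
    (K : Type*) [Field K] [Fintype K] [DecidableEq K] (hK : Fintype.card K = q)
    (R : Type*) [CommRing R] [Algebra K R]
    (π : R) (u : ℕ → R) (X : Fin h → R)
    (hX : ∀ i, (fmap q h π u)^[n] (X i) = 0) :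
    (gmap q h π)^[n] (mooreN q h n π u X) = 0 :=
  gmap_iterate_mooreN_eq_zero_general q h n hh hn K hK R π u X hX
end
end

section
/- The transformation (V_1, …, V_{h−1}) ↦ (B_1, …, B_{h−1}) is an involution: for every 1 ≤ i ≤ h−1, δ_i(B_1, …, B_{h−1}) = V_i in F_q[V_1, …, V_{h−1}]. -/
open Finset

noncomputable section

/-- The `(a,b)` entry (0-based) of the matrix `M(W)`, whose 1-based `(i,j)` entry is
`W_{j−i+1}^{q^{i−1}}`, with the convention that entries with negative index vanish. -/
def entryM (q : ℕ) {R : Type*} [CommRing R] (W : ℕ → R) (a b : ℕ) : R :=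
  if a ≤ b + 1 then W (b + 1 - a) ^ q ^ a else 0

/-- `δ_i(W) := (−1)^i` times the determinant of the top-left `i×i` submatrix of `M(W)`. -/
def deltaM (q : ℕ) {R : Type*} [CommRing R] (W : ℕ → R) (i : ℕ) : R :=
  (-1) ^ i * Matrix.det (Matrix.of fun a b : Fin i => entryM q W a b)

/-- The tuple `(V₁, …, V_{h−1})` of variables, extended by the conventions
`V₀ = 1` and `V_j = 0` for `j ≥ h`. -/
def vTuple (K : Type*) [Field K] (h : ℕ) : ℕ → MvPolynomial ℕ K := fun j =>
  if j = 0 then 1 else if j ≤ h - 1 then MvPolynomial.X j else 0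

/-- The tuple `(B₁, …, B_{h−1})`, where `B_i = δ_i(V₁, …, V_{h−1})`, extended by the
conventions `B₀ = 1` and `B_j = 0` for `j ≥ h`. -/
def bTuple (q : ℕ) (K : Type*) [Field K] (h : ℕ) : ℕ → MvPolynomial ℕ K := fun j =>
  if j = 0 then 1 else if j ≤ h - 1 then deltaM q (vTuple K h) j else 0

/-!
Put `(A ⋆ W)ₙ = ∑_{j+k=n} Aⱼ Wₖ^{q^j}`, the multiplication of skew power series in `τ` with
`τ a = a^q τ`. Since `M(W)` is upper Hessenberg with ones on the subdiagonal, the cofactor of the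
entry in row `k` of the last column of the top-left `(n+1)×(n+1)` block is `±det` of the top-left
`k×k` block; this expansion says `δ(W) ⋆ W = 1` whenever `W₀ = 1`. In characteristic `p` and for
`q = p^e`, `x ↦ x^q` is a ring endomorphism, so `⋆` is associative and
`δ(δ(W)) = δ(δ(W)) ⋆ (δ(W) ⋆ W) = (δ(δ(W)) ⋆ δ(W)) ⋆ W = W`.
-/

section Delta

variable {R : Type*} [CommRing R] (q : ℕ) (W : ℕ → R)

def matrixM (n : ℕ) : Matrix (Fin n) (Fin n) R :=
  Matrix.of fun a b => entryM q W a b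

lemma deltaM_eq_det (n : ℕ) : deltaM q W n = (-1) ^ n * (matrixM q W n).det := rfl

lemma deltaM_zero : deltaM q W 0 = 1 := by
  simp [deltaM]

lemma deltaM_congr {W₁ W₂ : ℕ → R} {i : ℕ} (h : ∀ j ≤ i, W₁ j = W₂ j) :
    deltaM q W₁ i = deltaM q W₂ i := by
  unfold deltaM entryM
  congr 3
  ext a b
  split_ifs with hab
  · rw [h _ (by omega)]
  · rfl

-- Expand along the last row, whose only nonzero entries are its last two.
lemma det_updateCol_matrixM_succ (hW0 : W 0 = 1) (c : ℕ → R) (m : ℕ) :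
    ((matrixM q W (m + 2)).updateCol (Fin.last (m + 1)) (fun a => c a)).det =
      c (m + 1) * (matrixM q W (m + 1)).det -
        ((matrixM q W (m + 1)).updateCol (Fin.last m) (fun a => c a)).det := by
  set A := (matrixM q W (m + 2)).updateCol (Fin.last (m + 1)) (fun a => c a)
  have hA_diag : A (Fin.last (m + 1)) (Fin.last (m + 1)) = c (m + 1) := by simp [A]
  have hA_subdiag : A (Fin.last (m + 1)) (Fin.last m).castSucc = 1 := by
    simp [A, matrixM, entryM, hW0]
  have hA_zero (j : Fin m) : A (Fin.last (m + 1)) j.castSucc.castSucc = 0 := by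
    simp [A, matrixM, entryM]
  have hminor_diag : A.submatrix (Fin.last (m + 1)).succAbove (Fin.last (m + 1)).succAbove =
      matrixM q W (m + 1) := by
    ext a b
    simp [A, matrixM]
  have hminor_subdiag :
      A.submatrix (Fin.last (m + 1)).succAbove (Fin.last m).castSucc.succAbove =
        (matrixM q W (m + 1)).updateCol (Fin.last m) (fun a => c a) := by
    ext a b
    induction b using Fin.lastCases with
    | last => simp [A]
    | cast b => simp [A, matrixM, Fin.succAbove_castSucc_of_lt _ _ (Fin.castSucc_lt_last b)]
  rw [Matrix.det_succ_row A (Fin.last (m + 1)), Fin.sum_univ_castSucc, Fin.sum_univ_castSucc,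
    sum_eq_zero fun j _ => by rw [hA_zero]; ring, hA_diag, hA_subdiag, hminor_diag,
    hminor_subdiag]
  have hodd : (-1 : R) ^ (m + 1 + m) = -1 := Odd.neg_one_pow ⟨m, by ring⟩
  have heven : (-1 : R) ^ (m + 1 + (m + 1)) = 1 := Even.neg_one_pow ⟨m + 1, rfl⟩
  simp only [Fin.val_last, Fin.val_castSucc, hodd, heven]
  ring

lemma det_updateCol_matrixM (hW0 : W 0 = 1) (c : ℕ → R) (n : ℕ) :
    ((matrixM q W (n + 1)).updateCol (Fin.last n) (fun a => c a)).det =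
      ∑ k ∈ range (n + 1), (-1) ^ (n - k) * c k * (matrixM q W k).det := by
  induction n with
  | zero => simp [matrixM]
  | succ m ih =>
    rw [det_updateCol_matrixM_succ q W hW0, ih, sum_range_succ _ (m + 1), Nat.sub_self,
      pow_zero, one_mul, sub_eq_neg_add, ← sum_neg_distrib]
    congr 1
    refine sum_congr rfl fun k hk => ?_
    rw [Nat.sub_add_comm (by simpa [Nat.lt_succ_iff] using hk), pow_succ]
    ring

lemma deltaM_succ (hW0 : W 0 = 1) (n : ℕ) :
    deltaM q W (n + 1) = -∑ k ∈ range (n + 1), deltaM q W k * W (n + 1 - k) ^ q ^ k := by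
  have hM : matrixM q W (n + 1) =
      (matrixM q W (n + 1)).updateCol (Fin.last n) (fun a => entryM q W a n) :=
    (Matrix.updateCol_eq_self _ _).symm
  rw [deltaM_eq_det, hM, det_updateCol_matrixM q W hW0 (entryM q W · n), mul_sum,
    ← sum_neg_distrib]
  refine sum_congr rfl fun k hk => ?_
  have hkn : k ≤ n := by simpa [Nat.lt_succ_iff] using hk
  have hsign : (-1 : R) ^ (n + 1) * (-1) ^ (n - k) = -(-1) ^ k := by
    rw [← pow_add, show n + 1 + (n - k) = 2 * (n - k) + k + 1 by omega, pow_succ, pow_add,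
      pow_mul]
    simp
  simp only [entryM, if_pos (show k ≤ n + 1 by omega), deltaM_eq_det]
  linear_combination (W (n + 1 - k) ^ q ^ k * (matrixM q W k).det) * hsign

/-- The `n`-th coefficient of `(∑ Aⱼ τʲ) * (∑ Bₖ τᵏ)` in the skew power series ring with
`τ * a = a ^ q * τ`. -/
def twistedMul (A B : ℕ → R) (n : ℕ) : R :=
  ∑ x ∈ antidiagonal n, A x.1 * B x.2 ^ q ^ x.1

lemma one_twistedMul (A : ℕ → R) : twistedMul q (Pi.single 0 1) A = A := by
  funext n
  simp [twistedMul, Nat.sum_antidiagonal_eq_sum_range_succ_mk, sum_range_succ']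

lemma twistedMul_one (hq : q ≠ 0) (A : ℕ → R) : twistedMul q A (Pi.single 0 1) = A := by
  funext n
  rw [twistedMul, ← Nat.sum_antidiagonal_swap]
  simp [Nat.sum_antidiagonal_eq_sum_range_succ_mk, sum_range_succ', hq]

lemma twistedMul_deltaM (hW0 : W 0 = 1) : twistedMul q (deltaM q W) W = Pi.single 0 1 := by
  funext n
  rw [twistedMul, Nat.sum_antidiagonal_eq_sum_range_succ_mk]
  cases n with
  | zero => simp [deltaM_zero, hW0]
  | succ n =>
    rw [sum_range_succ, Nat.sub_self, hW0, one_pow, mul_one, deltaM_succ q W hW0]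
    simp

section Frobenius

variable (p e : ℕ) [ExpChar R p]

lemma twistedMul_assoc (A B C : ℕ → R) :
    twistedMul (p ^ e) (twistedMul (p ^ e) A B) C =
      twistedMul (p ^ e) A (twistedMul (p ^ e) B C) := by
  funext n
  simp only [twistedMul, ← pow_mul, sum_pow_char_pow, mul_pow, sum_mul, mul_sum, sum_sigma']
  apply sum_nbij' (fun ⟨⟨_i, j⟩, ⟨k, l⟩⟩ ↦ ⟨(k, l + j), (l, j)⟩)
    (fun ⟨⟨i, _j⟩, ⟨k, l⟩⟩ ↦ ⟨(i + k, l), (i, k)⟩)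
  iterate 4
    rintro ⟨⟨i, j⟩, ⟨k, l⟩⟩ hx
    simp only [mem_sigma, HasAntidiagonal.mem_antidiagonal, Sigma.mk.injEq, Prod.mk.injEq,
      heq_eq_eq, true_and, and_true] at hx ⊢
    omega
  rintro ⟨⟨i, j⟩, ⟨k, l⟩⟩ hx
  obtain ⟨-, rfl⟩ : i + j = n ∧ k + l = i := by simpa using hx
  simp only [← pow_add, ← mul_add, mul_assoc, add_comm l k]

theorem deltaM_deltaM (hW0 : W 0 = 1) :
    deltaM (p ^ e) (deltaM (p ^ e) W) = W := by
  set D := deltaM (p ^ e) W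
  calc deltaM (p ^ e) D
      = twistedMul (p ^ e) (deltaM (p ^ e) D) (twistedMul (p ^ e) D W) := by
        rw [twistedMul_deltaM _ _ hW0, twistedMul_one _ (expChar_pow_pos R p e).ne']
    _ = twistedMul (p ^ e) (twistedMul (p ^ e) (deltaM (p ^ e) D) D) W :=
        (twistedMul_assoc p e _ _ _).symm
    _ = W := by rw [twistedMul_deltaM _ _ (deltaM_zero _ _), one_twistedMul]

end Frobenius

end Delta

theorem deltaM_bTuple_involution_general
    (q h : ℕ)
    (K : Type*) [Field K] [Fintype K] (hK : Fintype.card K = q)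
    (i : ℕ) (hi1 : 1 ≤ i) (hi2 : i ≤ h - 1) :
    deltaM q (bTuple q K h) i = MvPolynomial.X i := by
  obtain ⟨n, hp, hcard⟩ := FiniteField.card K (ringChar K)
  have : ExpChar (MvPolynomial ℕ K) (ringChar K) := ExpChar.prime hp
  have hB : ∀ j ≤ i, bTuple q K h j = deltaM q (vTuple K h) j := by
    intro j hj
    rcases j.eq_zero_or_pos with rfl | hj0
    · simp [bTuple, deltaM_zero]
    · simp [bTuple, hj0.ne', hj.trans hi2]
  rw [deltaM_congr _ hB, ← hK, hcard, deltaM_deltaM _ _ _ (by simp [vTuple])]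
  simp [vTuple, Nat.one_le_iff_ne_zero.mp hi1, hi2]

/-- The transformation `(V₁, …, V_{h−1}) ↦ (B₁, …, B_{h−1})` is an involution:
for every `1 ≤ i ≤ h−1`, `δ_i(B₁, …, B_{h−1}) = V_i`. -/
theorem deltaM_bTuple_involution
    (p e q h : ℕ) (hp : p.Prime) (he : 1 ≤ e) (hq : q = p ^ e) (hh : 2 ≤ h)
    (K : Type*) [Field K] [Fintype K] (hK : Fintype.card K = q)
    (i : ℕ) (hi1 : 1 ≤ i) (hi2 : i ≤ h - 1) :
    deltaM q (bTuple q K h) i = MvPolynomial.X i :=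
  deltaM_bTuple_involution_general q h K hK i hi1 hi2
end
end

section
/- Let N be the h×h matrix whose first row is (V_1^{q^h} − V_1, V_2^{q^h} − V_2, …, V_{h−1}^{q^h} − V_{h−1}, 0) and whose (i,j) entry for 2 ≤ i ≤ h is V_{j−i+1}^{q^{i−1}} (conventions V_0 = 1, V_j = 0 for j < 0). Then det N = (−1)^{h−1} ( B_h + Σ_{i=1}^{h−1} V_i^{q^h} B_{h−i}^{q^i} ) in F_q[V_1, …, V_{h−1}]. -/
open Finset

noncomputable section

/-- The matrix `N`: first row `(V₁^{q^h} − V₁, …, V_{h−1}^{q^h} − V_{h−1}, 0)`, and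
`(i,j)` entry `V_{j−i+1}^{q^{i−1}}` for `2 ≤ i ≤ h`. -/
def matN (q : ℕ) (K : Type*) [Field K] (h : ℕ) :
    Matrix (Fin h) (Fin h) (MvPolynomial ℕ K) :=
  Matrix.of fun a b =>
    if (a : ℕ) = 0 then
      (if (b : ℕ) + 1 ≤ h - 1 then
        vTuple K h ((b : ℕ) + 1) ^ q ^ h - vTuple K h ((b : ℕ) + 1)
       else 0)
    else entryM q (vTuple K h) a b

lemma det_entryM_block {R : Type*} [CommRing R] (p f q : ℕ) (hp : p.Prime)
    (hq : q = p ^ f) [CharP R p]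
    (V : ℕ → R) (hV0 : V 0 = 1) (n : ℕ) (u : Fin (n + 1) → R) :
    Matrix.det (Matrix.of fun a b : Fin (n + 1) =>
        if (a : ℕ) = 0 then u b else entryM q V a b)
      = (-1) ^ n * ∑ j : Fin (n + 1),
          u j * deltaM q V (n - (j : ℕ)) ^ q ^ ((j : ℕ) + 1) := by
  subst hq
  haveI := Fact.mk hp
  have key : ∀ j : Fin (n + 1),
      Matrix.det ((Matrix.of fun a b : Fin (n + 1) =>
          if (a : ℕ) = 0 then u b else entryM (p ^ f) V a b).submatrix Fin.succ j.succAbove)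
        = (-1) ^ (n - (j : ℕ)) * deltaM (p ^ f) V (n - (j : ℕ)) ^ (p ^ f) ^ ((j : ℕ) + 1) := by
    intro j
    have hjle : (j : ℕ) ≤ n := Nat.lt_succ_iff.mp j.isLt
    have hsum : (j : ℕ) + (n - (j : ℕ)) = n := by omega
    set jn := (j : ℕ) with hjn
    set m := n - jn with hm
    let E : Fin jn ⊕ Fin m ≃ Fin n := finSumFinEquiv.trans (finCongr hsum)
    have hEl : ∀ s : Fin jn, ((E (Sum.inl s)) : ℕ) = s := fun s => rfl
    have hEr : ∀ s : Fin m, ((E (Sum.inr s)) : ℕ) = jn + s := fun s => rfl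
    have hc1 : ∀ t : Fin n, (t : ℕ) < jn → ((j.succAbove t) : ℕ) = t := by
      intro t ht
      rw [Fin.succAbove_of_castSucc_lt _ _ (by rwa [Fin.lt_def, Fin.coe_castSucc])]
      exact Fin.coe_castSucc t
    have hc2 : ∀ t : Fin n, jn ≤ (t : ℕ) → ((j.succAbove t) : ℕ) = t + 1 := by
      intro t ht
      rw [Fin.succAbove_of_le_castSucc _ _ (by rwa [Fin.le_def, Fin.coe_castSucc])]
      exact Fin.val_succ t
    rw [← Matrix.det_submatrix_equiv_self E]
    have hblock : (((Matrix.of fun a b : Fin (n + 1) =>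
          if (a : ℕ) = 0 then u b else entryM (p ^ f) V a b).submatrix Fin.succ
            j.succAbove).submatrix E E)
        = Matrix.fromBlocks
            (Matrix.of fun s t : Fin jn => entryM (p ^ f) V ((s : ℕ) + 1) (t : ℕ))
            (Matrix.of fun (s : Fin jn) (t : Fin m) =>
              entryM (p ^ f) V ((s : ℕ) + 1) (jn + (t : ℕ) + 1))
            0
            ((Matrix.of fun s t : Fin m => entryM (p ^ f) V s t).map
              (iterateFrobenius R p (f * (jn + 1)))) := by
      ext i k
      rcases i with s | s <;> rcases k with t | t <;>
        simp only [Matrix.submatrix_apply, Matrix.of_apply, Matrix.fromBlocks_apply₁₁,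
          Matrix.fromBlocks_apply₁₂, Matrix.fromBlocks_apply₂₁, Matrix.fromBlocks_apply₂₂,
          Fin.val_succ, Matrix.map_apply, Matrix.zero_apply]
      · rw [if_neg (by rw [hEl]; omega), hEl, hc1 _ (by rw [hEl]; exact t.isLt), hEl]
      · rw [if_neg (by rw [hEl]; omega), hEl, hc2 _ (by rw [hEr]; omega), hEr]
      · rw [if_neg (by rw [hEr]; omega), hEr, hc1 _ (by rw [hEl]; exact t.isLt), hEl,
          entryM, if_neg (by have := t.isLt; omega)]
      · rw [if_neg (by rw [hEr]; omega), hEr, hc2 _ (by rw [hEr]; omega), hEr,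
          iterateFrobenius_def]
        unfold entryM
        split_ifs with h1 h2 h2
        · have hidx : jn + (t : ℕ) + 1 + 1 - (jn + (s : ℕ) + 1) = (t : ℕ) + 1 - (s : ℕ) := by
            omega
          rw [hidx, ← pow_mul, ← pow_mul, ← pow_mul, ← pow_add]
          congr 1
          ring
        · omega
        · omega
        · rw [zero_pow (pow_ne_zero _ hp.pos.ne')]
    rw [hblock, Matrix.det_fromBlocks_zero₂₁]
    have hP : (Matrix.of fun s t : Fin jn =>
        entryM (p ^ f) V ((s : ℕ) + 1) (t : ℕ)).det = 1 := by
      rw [Matrix.det_of_upperTriangular (by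
        intro a b hab
        simp only [Matrix.of_apply, entryM]
        rw [if_neg (by simp only [id] at hab; rw [Fin.lt_def] at hab; omega)])]
      have : ∀ a : Fin jn, entryM (p ^ f) V ((a : ℕ) + 1) (a : ℕ) = 1 := by
        intro a
        rw [entryM, if_pos (by omega)]
        have : (a : ℕ) + 1 - ((a : ℕ) + 1) = 0 := by omega
        rw [this, hV0, one_pow]
      simp [this]
    have hD : ((Matrix.of fun s t : Fin m => entryM (p ^ f) V s t).map
          (iterateFrobenius R p (f * (jn + 1)))).det
        = (-1) ^ m * deltaM (p ^ f) V m ^ (p ^ f) ^ (jn + 1) := by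
      have hmapdet := RingHom.map_det (iterateFrobenius R p (f * (jn + 1)))
        (Matrix.of fun s t : Fin m => entryM (p ^ f) V (s : ℕ) (t : ℕ))
      rw [RingHom.mapMatrix_apply] at hmapdet
      rw [← hmapdet]
      have hbase : (Matrix.of fun s t : Fin m => entryM (p ^ f) V s t).det
          = (-1) ^ m * deltaM (p ^ f) V m := by
        rw [deltaM, ← mul_assoc, ← pow_add]
        rw [Even.neg_one_pow ⟨m, by ring⟩, one_mul]
      rw [hbase, map_mul, map_pow, map_neg, map_one, iterateFrobenius_def, ← pow_mul]
    rw [hP, hD, one_mul]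
  rw [Matrix.det_succ_row_zero, Finset.mul_sum]
  apply Finset.sum_congr rfl
  intro j _
  rw [key j]
  have h0 : ((0 : Fin (n + 1)) : ℕ) = 0 := rfl
  simp only [Matrix.of_apply, h0, if_pos rfl]
  have hjle : (j : ℕ) ≤ n := Nat.lt_succ_iff.mp j.isLt
  have hadd : (j : ℕ) + (n - (j : ℕ)) = n := by omega
  calc (-1 : R) ^ (j : ℕ) * u j *
        ((-1) ^ (n - (j : ℕ)) * deltaM (p ^ f) V (n - (j : ℕ)) ^ (p ^ f) ^ ((j : ℕ) + 1))
      = ((-1) ^ (j : ℕ) * (-1) ^ (n - (j : ℕ))) *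
        (u j * deltaM (p ^ f) V (n - (j : ℕ)) ^ (p ^ f) ^ ((j : ℕ) + 1)) := by ring
    _ = (-1) ^ n * (u j * deltaM (p ^ f) V (n - (j : ℕ)) ^ (p ^ f) ^ ((j : ℕ) + 1)) := by
        rw [← pow_add, hadd]

/-- `det N = (−1)^{h−1}(B_h + Σ_{i=1}^{h−1} V_i^{q^h} B_{h−i}^{q^i})`, where
`B_i = δ_i(V₁, …, V_{h−1})`. -/
theorem det_matN
    (p e q h : ℕ) (hp : p.Prime) (he : 1 ≤ e) (hq : q = p ^ e) (hh : 2 ≤ h)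
    (K : Type*) [Field K] [Fintype K] (hK : Fintype.card K = q) :
    Matrix.det (matN q K h)
      = (-1) ^ (h - 1) *
        (deltaM q (vTuple K h) h +
          ∑ i ∈ Finset.Ico 1 h,
            MvPolynomial.X i ^ q ^ h * deltaM q (vTuple K h) (h - i) ^ q ^ i) := by
  have hq0 : q ≠ 0 := by rw [hq]; exact pow_ne_zero _ hp.pos.ne'
  have hqpow : ∀ k : ℕ, q ^ k ≠ 0 := fun k => pow_ne_zero _ hq0
  -- characteristic of K is p
  haveI hcharK : CharP K p := by
    obtain ⟨r, hr⟩ := CharP.exists K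
    haveI := hr
    obtain ⟨nn, hrp, hcard⟩ := FiniteField.card K r
    have hpr : p = r := by
      have hdvd : p ∣ r ^ (nn : ℕ) := by
        rw [← hcard, hK, hq]; exact dvd_pow_self p (by omega)
      exact (Nat.prime_dvd_prime_iff_eq hp hrp).mp (hp.dvd_of_dvd_pow hdvd)
    rwa [hpr]
  haveI : CharP (MvPolynomial ℕ K) p := inferInstance
  obtain ⟨n, rfl⟩ : ∃ n, h = n + 1 := ⟨h - 1, by omega⟩
  have hn : 1 ≤ n := by omega
  set V := vTuple K (n + 1) with hV
  have hV0 : V 0 = 1 := by simp [hV, vTuple]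
  have hVX : ∀ i : ℕ, 1 ≤ i → i ≤ n → V i = MvPolynomial.X i := by
    intro i h1 h2
    rw [hV]
    unfold vTuple
    rw [if_neg (by omega), if_pos (by omega)]
  have hVtop : ∀ i : ℕ, n + 1 ≤ i → V i = 0 := by
    intro i hi
    rw [hV]
    unfold vTuple
    rw [if_neg (by omega), if_neg (by omega)]
  -- rewrite matN
  have hNmat : matN q K (n + 1) = Matrix.of (fun a b : Fin (n + 1) =>
      if (a : ℕ) = 0 then (V ((b : ℕ) + 1) ^ q ^ (n + 1) - V ((b : ℕ) + 1))
      else entryM q V a b) := by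
    ext a b
    simp only [matN, Matrix.of_apply]
    by_cases ha : (a : ℕ) = 0
    · rw [if_pos ha, if_pos ha]
      by_cases hb : (b : ℕ) + 1 ≤ n + 1 - 1
      · rw [if_pos hb]
      · rw [if_neg hb, hVtop ((b : ℕ) + 1) (by omega), zero_pow (hqpow _), sub_zero]
    · rw [if_neg ha, if_neg ha]
  have hdet1 := det_entryM_block p e q hp hq V hV0 n
    (fun b : Fin (n + 1) => V ((b : ℕ) + 1) ^ q ^ (n + 1) - V ((b : ℕ) + 1))
  have hdet2 := det_entryM_block p e q hp hq V hV0 n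
    (fun b : Fin (n + 1) => V ((b : ℕ) + 1))
  -- the matrix in hdet2 is the deltaM matrix
  have hMmat : (Matrix.of (fun a b : Fin (n + 1) =>
      if (a : ℕ) = 0 then V ((b : ℕ) + 1) else entryM q V a b))
      = Matrix.of (fun a b : Fin (n + 1) => entryM q V a b) := by
    ext a b
    simp only [Matrix.of_apply]
    by_cases ha : (a : ℕ) = 0
    · rw [if_pos ha, ha, entryM, if_pos (by omega), Nat.sub_zero, pow_zero, pow_one]
    · rw [if_neg ha]
  have hB : deltaM q V (n + 1)
      = - ∑ j : Fin (n + 1), V ((j : ℕ) + 1) * deltaM q V (n - (j : ℕ)) ^ q ^ ((j : ℕ) + 1) := by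
    rw [deltaM, ← hMmat, hdet2, ← mul_assoc, ← pow_add,
      Odd.neg_one_pow ⟨n, by ring⟩, neg_one_mul]
  -- main sum identity
  have hmain : ∑ j : Fin (n + 1),
        V ((j : ℕ) + 1) ^ q ^ (n + 1) * deltaM q V (n - (j : ℕ)) ^ q ^ ((j : ℕ) + 1)
      = ∑ i ∈ Finset.Ico 1 (n + 1),
          MvPolynomial.X (R := K) i ^ q ^ (n + 1) * deltaM q V (n + 1 - i) ^ q ^ i := by
    rw [Fin.sum_univ_eq_sum_range
      (fun j => V (j + 1) ^ q ^ (n + 1) * deltaM q V (n - j) ^ q ^ (j + 1)) (n + 1)]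
    rw [Finset.sum_range_succ, hVtop (n + 1) le_rfl, zero_pow (hqpow _), zero_mul, add_zero]
    rw [Finset.sum_Ico_eq_sum_range]
    have hrange : n + 1 - 1 = n := by omega
    rw [hrange]
    apply Finset.sum_congr rfl
    intro j hj
    rw [Finset.mem_range] at hj
    rw [hVX (j + 1) (by omega) (by omega)]
    have h1 : 1 + j = j + 1 := by omega
    rw [h1, show n + 1 - (j + 1) = n - j from by omega]
  rw [hNmat, hdet1]
  have hsub : ∑ j : Fin (n + 1),
        (V ((j : ℕ) + 1) ^ q ^ (n + 1) - V ((j : ℕ) + 1)) *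
          deltaM q V (n - (j : ℕ)) ^ q ^ ((j : ℕ) + 1)
      = (∑ j : Fin (n + 1),
          V ((j : ℕ) + 1) ^ q ^ (n + 1) * deltaM q V (n - (j : ℕ)) ^ q ^ ((j : ℕ) + 1))
        - ∑ j : Fin (n + 1),
            V ((j : ℕ) + 1) * deltaM q V (n - (j : ℕ)) ^ q ^ ((j : ℕ) + 1) := by
    rw [← Finset.sum_sub_distrib]
    apply Finset.sum_congr rfl
    intro j _
    ring
  rw [hsub, hmain]
  have hcast : n + 1 - 1 = n := by omega
  rw [hcast, hB]
  ring
end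
end

section
/- The F_q-algebra F_q[V_1, …, V_h]/(μ(V_1, …, V_h)^{q−1} − 1) is a smooth F_q-algebra; equivalently, the ideal of F_q[V_1, …, V_h] generated by μ(V_1, …, V_h)^{q−1} − 1 together with its h partial derivatives ∂(μ^{q−1})/∂V_i (1 ≤ i ≤ h) is the unit ideal, so the affine hypersurface μ(V_1, …, V_h)^{q−1} = 1 (the reduction of the Lubin–Tate space at level π, a Deligne–Lusztig variety for GL_h(F_q)) is smooth. -/
/-!
The Moore determinant `μ` is homogeneous of degree `1 + q + ⋯ + q^(h-1)`, which is `1` in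
characteristic `p`; hence `μ^(q-1)` has degree `-1` there, and Euler's identity gives
`F + ∑ Vᵢ ∂ᵢF = -1` for `F = μ^(q-1) - 1`, so the Jacobian ideal of `F` is the unit ideal.
Smoothness follows from the Jacobian criterion for a hypersurface, proved directly: from
`aF + ∑ bᵢ ∂ᵢF = 1`, the substitution `Vᵢ ↦ Vᵢ - bᵢF` maps `F` into `(F²)` by Taylor's formula,
which gives a section of `P/(F²) → P/(F)`.
-/

open Finset

noncomputable section

/-- The Moore determinant `μ(V₁, …, V_h) = det (Vᵢ^{q^{j-1}})` of the variables of
`F_q[V₁, …, V_h]`. -/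
def mooreV (q h : ℕ) (K : Type*) [Field K] : MvPolynomial (Fin h) K :=
  Matrix.det (Matrix.of fun i j : Fin h => MvPolynomial.X i ^ q ^ (j : ℕ))

/-- The defining polynomial `μ(V₁, …, V_h)^{q−1} − 1` of the reduction of the Lubin–Tate
space at level `π` (a Deligne–Lusztig variety for `GL_h(F_q)`). -/
def dlPoly (q h : ℕ) (K : Type*) [Field K] : MvPolynomial (Fin h) K :=
  mooreV q h K ^ (q - 1) - 1

open MvPolynomial

namespace MvPolynomial

variable {σ R : Type*} [CommRing R]

theorem isHomogeneous_det {n : Type*} [Fintype n] [DecidableEq n]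
    (M : Matrix n n (MvPolynomial σ R)) (d : n → ℕ)
    (hM : ∀ i j, (M i j).IsHomogeneous (d j)) :
    M.det.IsHomogeneous (∑ j, d j) := by
  rw [Matrix.det_apply]
  refine IsHomogeneous.sum _ _ _ fun τ _ => ?_
  rw [Units.smul_def]
  exact (homogeneousSubmodule σ R _).toAddSubgroup.zsmul_mem
    (IsHomogeneous.prod _ _ _ fun i _ => hM _ _) _

theorem formallySmooth_quotient_of_aeval_X_add_mem_sq {I : Ideal (MvPolynomial σ R)}
    {c : σ → MvPolynomial σ R} (hc : ∀ i, c i ∈ I)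
    (hI : ∀ f ∈ I, aeval (fun i => X i + c i) f ∈ I ^ 2) :
    Algebra.FormallySmooth R (MvPolynomial σ R ⧸ I) := by
  let f := Ideal.Quotient.mkₐ R I
  have hker : RingHom.ker f.toRingHom = I := Ideal.Quotient.mkₐ_ker R I
  let φ : MvPolynomial σ R →ₐ[R] MvPolynomial σ R ⧸ RingHom.ker f.toRingHom ^ 2 :=
    (Ideal.Quotient.mkₐ R _).comp (aeval fun i => X i + c i)
  have hφ : ∀ x ∈ I, φ x = 0 := fun x hx => by
    rw [AlgHom.comp_apply, Ideal.Quotient.mkₐ_eq_mk, Ideal.Quotient.eq_zero_iff_mem, hker]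
    exact hI x hx
  refine .of_split f (Ideal.Quotient.liftₐ I φ hφ)
    (Ideal.Quotient.algHom_ext _ (algHom_ext fun i => ?_))
  simp only [AlgHom.comp_apply, Ideal.Quotient.mkₐ_eq_mk, Ideal.Quotient.liftₐ_apply, φ, f]
  exact Ideal.Quotient.eq.2 (by simpa using hc i)

variable [Fintype σ]

theorem aeval_X_add_sub_taylor_mem_sq {J : Ideal (MvPolynomial σ R)} {c : σ → MvPolynomial σ R}
    (hc : ∀ i, c i ∈ J) (F : MvPolynomial σ R) :
    aeval (fun i => X i + c i) F - (F + ∑ i, c i * pderiv i F) ∈ J ^ 2 := by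
  classical
  induction F using MvPolynomial.induction_on with
  | C a => simp [algebraMap_eq]
  | add F G hF hG =>
    convert (J ^ 2).add_mem hF hG using 1
    simp only [map_add, mul_add, Finset.sum_add_distrib]
    ring
  | mul_X F j hF =>
    have hDF : ∑ i, c i * pderiv i F ∈ J := J.sum_mem fun i _ => J.mul_mem_right _ (hc i)
    have hD : ∑ i, c i * pderiv i (F * X j) = (∑ i, c i * pderiv i F) * X j + c j * F := by
      simp only [pderiv_mul, pderiv_X, mul_add, Finset.sum_add_distrib, Finset.sum_mul]
      congr 1
      · exact Finset.sum_congr rfl fun i _ => by ring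
      · simp [Pi.single_apply, mul_comm]
    rw [map_mul, aeval_X, hD]
    have hexpand : aeval (fun i => X i + c i) F * (X j + c j)
          - (F * X j + ((∑ i, c i * pderiv i F) * X j + c j * F))
        = (aeval (fun i => X i + c i) F - (F + ∑ i, c i * pderiv i F)) * (X j + c j)
          + (∑ i, c i * pderiv i F) * c j := by ring
    rw [hexpand]
    exact (J ^ 2).add_mem ((J ^ 2).mul_mem_right _ hF) (pow_two J ▸ Ideal.mul_mem_mul hDF (hc j))

theorem smooth_quotient_span_singleton_of_span_pderiv_eq_top {F : MvPolynomial σ R}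
    (hF : Ideal.span ({F} ∪ Set.range fun i => pderiv i F) = ⊤) :
    Algebra.Smooth R (MvPolynomial σ R ⧸ Ideal.span {F}) := by
  obtain ⟨a, b, hab⟩ : ∃ (a : MvPolynomial σ R) (b : σ → MvPolynomial σ R),
      a * F + ∑ i, b i * pderiv i F = 1 := by
    have h1 : 1 ∈ Ideal.span {F} ⊔ Ideal.span (Set.range fun i => pderiv i F) := by
      rw [← Ideal.span_union, hF]
      exact Submodule.mem_top
    obtain ⟨y, hy, z, hz, hyz⟩ := Submodule.mem_sup.1 h1
    obtain ⟨a, rfl⟩ := Ideal.mem_span_singleton'.1 hy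
    obtain ⟨b, rfl⟩ := Ideal.mem_span_range_iff_exists_fun.1 hz
    exact ⟨a, b, hyz⟩
  set I := Ideal.span {F}
  have hc : ∀ i, -(b i * F) ∈ I := fun i =>
    I.neg_mem (I.mul_mem_left _ (Ideal.mem_span_singleton_self F))
  have hFsq : aeval (fun i => X i + -(b i * F)) F ∈ I ^ 2 := by
    have hlin : F + ∑ i, -(b i * F) * pderiv i F = a * F ^ 2 := by
      simp only [neg_mul, Finset.sum_neg_distrib, mul_right_comm _ F, ← Finset.sum_mul]
      linear_combination (-F) * hab
    have hsq : a * F ^ 2 ∈ I ^ 2 := by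
      rw [Ideal.span_singleton_pow]
      exact Ideal.mul_mem_left _ _ (Ideal.mem_span_singleton_self _)
    have := (I ^ 2).add_mem (aeval_X_add_sub_taylor_mem_sq hc F) hsq
    rwa [hlin, sub_add_cancel] at this
  have hI : ∀ f ∈ I, aeval (fun i => X i + -(b i * F)) f ∈ I ^ 2 := by
    intro f hf
    obtain ⟨r, rfl⟩ := Ideal.mem_span_singleton'.1 hf
    rw [map_mul]
    exact (I ^ 2).mul_mem_left _ hFsq
  exact { formallySmooth := formallySmooth_quotient_of_aeval_X_add_mem_sq hc hI
          finitePresentation := .quotient ⟨{F}, by simp [I]⟩ }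

theorem IsHomogeneous.span_sub_one_pderiv_eq_top {G : MvPolynomial σ R} {n : ℕ}
    (hG : G.IsHomogeneous n) (hn : IsUnit (n : R)) :
    Ideal.span ({G - 1} ∪ Set.range fun i => pderiv i (G - 1)) = ⊤ := by
  set J := Ideal.span ({G - 1} ∪ Set.range fun i => pderiv i (G - 1))
  have hF : G - 1 ∈ J := Ideal.subset_span (Or.inl rfl)
  have hEuler : (n : MvPolynomial σ R) * G ∈ J := by
    rw [← nsmul_eq_mul, ← hG.sum_X_mul_pderiv]
    exact Ideal.sum_mem _ fun i _ => J.mul_mem_left _ (Ideal.subset_span (Or.inr ⟨i, by simp⟩))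
  have hGJ : G ∈ J := (Ideal.unit_mul_mem_iff_mem J (by simpa using hn.map C)).1 hEuler
  rw [Ideal.eq_top_iff_one]
  simpa using J.sub_mem hGJ hF

end MvPolynomial

theorem natCast_geom_sum_mul_sub_one_eq_neg_one {R : Type*} [Ring R] {q h : ℕ} (hq : 1 ≤ q)
    (hqR : (q : R) = 0) (hh : 1 ≤ h) :
    (((∑ j : Fin h, q ^ (j : ℕ)) * (q - 1) : ℕ) : R) = -1 := by
  rw [Fin.sum_univ_eq_sum_range (q ^ ·), Nat.cast_mul, Nat.cast_sub hq]
  push_cast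
  rw [geom_sum_mul, hqR, zero_pow (by omega), zero_sub]

theorem isHomogeneous_mooreV (q h : ℕ) (K : Type*) [Field K] :
    (mooreV q h K).IsHomogeneous (∑ j : Fin h, q ^ (j : ℕ)) :=
  isHomogeneous_det _ _ fun i _ => isHomogeneous_X_pow i _

theorem span_dlPoly_pderiv_eq_top {q h : ℕ} {K : Type*} [Field K] (hq : 1 ≤ q)
    (hqK : (q : K) = 0) (hh : 1 ≤ h) :
    Ideal.span ({dlPoly q h K} ∪ Set.range fun i => pderiv i (dlPoly q h K)) = ⊤ :=
  ((isHomogeneous_mooreV q h K).pow (q - 1)).span_sub_one_pderiv_eq_top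
    (by rw [natCast_geom_sum_mul_sub_one_eq_neg_one hq hqK hh]; exact isUnit_one.neg)

theorem deligne_lusztig_hypersurface_smooth_general
    (q h : ℕ) (hh : 1 ≤ h)
    (K : Type*) [Field K] [Fintype K] (hK : Fintype.card K = q) :
    Algebra.Smooth K (MvPolynomial (Fin h) K ⧸ Ideal.span {dlPoly q h K})
    ∧ Ideal.span
        ({dlPoly q h K} ∪
          Set.range fun i : Fin h => MvPolynomial.pderiv i (dlPoly q h K)) = ⊤ := by
  have hjac := span_dlPoly_pderiv_eq_top (hK ▸ Fintype.card_pos)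
    (hK ▸ FiniteField.cast_card_eq_zero K) hh
  exact ⟨smooth_quotient_span_singleton_of_span_pderiv_eq_top hjac, hjac⟩

/-- `F_q[V₁, …, V_h]/(μ^{q−1} − 1)` is a smooth `F_q`-algebra; equivalently, the ideal
generated by `μ^{q−1} − 1` together with its `h` partial derivatives is the unit ideal,
so the affine hypersurface `μ(V₁, …, V_h)^{q−1} = 1` is smooth. -/
theorem deligne_lusztig_hypersurface_smooth
    (p e q h : ℕ) (hp : p.Prime) (he : 1 ≤ e) (hq : q = p ^ e) (hh : 1 ≤ h)
    (K : Type*) [Field K] [Fintype K] (hK : Fintype.card K = q) :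
    Algebra.Smooth K (MvPolynomial (Fin h) K ⧸ Ideal.span {dlPoly q h K})
    ∧ Ideal.span
        ({dlPoly q h K} ∪
          Set.range fun i : Fin h => MvPolynomial.pderiv i (dlPoly q h K)) = ⊤ :=
  deligne_lusztig_hypersurface_smooth_general q h hh K hK
end
end

section
/- Let K be an algebraically closed field of characteristic p (hence containing F_q) equipped with a valuation v : K → ℝ ∪ {∞} (v(xy) = v(x) + v(y), v(x+y) ≥ min(v(x), v(y)), v(x) = ∞ iff x = 0). Let π ∈ K with v(π) = 1, let c_1, …, c_{h−1} ∈ K with v(c_i) ≥ 0, and set f(X) = πX + πc_1X^q + ⋯ + πc_{h−1}X^{q^{h−1}} + X^{q^h}. Let x ∈ K satisfy x^{q^h−1} = −π (so v(x) = 1/(q^h−1)). Then there is exactly one root y ∈ K of f with v(y − x) > 1/(q^h−1), and this root satisfies v(y − x) ≥ q/(q^h−1). -/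
/-!
In characteristic `p` the map `f` is additive, and it is the evaluation of a monic polynomial of
degree `q^h`. Put `τ = 1/(q^h - 1) = v x`. If `v t > τ`, the linear term `π t` dominates, so
`v (f t) = 1 + v t`; since `x^(q^h) = -π x` cancels the linear term of `f x`, also
`v (f x) ≥ 1 + q τ`. Two roots within `τ` of `x` differ by a root `t` of `f` with `v t > τ`,
which forces `t = 0`; and a root `y` near `x` has `1 + v (y - x) = v (f (y - x)) = v (f x)`,
giving `v (y - x) ≥ q τ`. For existence, `f x` is the product of `x - y` over the `q^h` roots `y`
of `f`; if each factor had valuation at most `τ`, then `v (f x) ≤ q^h τ < 1 + q τ`.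
-/

open Finset Polynomial

lemma WithTop.eq_coe_div_of_nsmul_eq_coe {a : WithTop ℝ} {n : ℕ} {r : ℝ} (hr : r ≠ 0)
    (h : n • a = r) : a = ((r / n : ℝ) : WithTop ℝ) := by
  obtain ⟨m, rfl⟩ : ∃ m, n = m + 1 := Nat.exists_eq_succ_of_ne_zero (by rintro rfl; simp_all)
  lift a to ℝ using (by rintro rfl; simp [succ_nsmul] at h)
  rw [← WithTop.coe_nsmul, WithTop.coe_inj, nsmul_eq_mul] at h
  rw [WithTop.coe_inj, ← h]
  field_simp

namespace AddValuation

variable {R : Type*} [CommRing R] {Γ₀ : Type*} [LinearOrderedAddCommMonoidWithTop Γ₀]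
  (v : AddValuation R Γ₀)

lemma map_multiset_prod (s : Multiset R) : v s.prod = (s.map v).sum := by
  induction s using Multiset.induction_on with
  | empty => simp
  | cons a s ih => simp [ih]

theorem exists_mem_roots_lt_map_sub [IsDomain R] {P : R[X]} (hm : P.Monic) (hs : P.Splits)
    {γ : Γ₀} (a : R) (h : P.natDegree • γ < v (P.eval a)) : ∃ r ∈ P.roots, γ < v (a - r) := by
  by_contra! H
  refine h.not_ge ?_
  rw [hs.eval_eq_prod_roots_of_monic hm, map_multiset_prod, Multiset.map_map,
    hs.natDegree_eq_card_roots, ← Multiset.card_map (fun r => v (a - r))]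
  refine Multiset.sum_le_card_nsmul _ _ fun g hg => ?_
  obtain ⟨r, hr, rfl⟩ := Multiset.mem_map.1 hg
  exact H r hr

end AddValuation

section LubinTate

variable {R : Type*} [CommRing R]

noncomputable def lubinTatePoly (π : R) (c : ℕ → R) (q h : ℕ) : R[X] :=
  C π * X + ∑ i ∈ Ico 1 h, C (π * c i) * X ^ q ^ i + X ^ q ^ h

variable {π : R} {c : ℕ → R} {q h : ℕ}

@[simp]
lemma eval_lubinTatePoly (t : R) :
    (lubinTatePoly π c q h).eval t = π * t + ∑ i ∈ Ico 1 h, π * c i * t ^ q ^ i + t ^ q ^ h := by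
  simp [lubinTatePoly, eval_finsetSum]

lemma eval_lubinTatePoly_zero (hq : q ≠ 0) : (lubinTatePoly π c q h).eval 0 = 0 := by
  have hzero (n : ℕ) : (0 : R) ^ q ^ n = 0 := zero_pow (pow_ne_zero n hq)
  simp [hzero]

lemma degree_lubinTatePoly_sub_X_pow_lt [Nontrivial R] (hq : 1 < q) (hh : h ≠ 0) :
    degree (C π * X + ∑ i ∈ Ico 1 h, C (π * c i) * X ^ q ^ i) < degree (X ^ q ^ h : R[X]) := by
  rw [degree_X_pow]
  refine (degree_add_le _ _).trans_lt (max_lt ?_ ?_)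
  · exact (degree_C_mul_X_le π).trans_lt
      (by exact_mod_cast Nat.one_lt_pow hh hq)
  · refine (degree_sum_le _ _).trans_lt ((Finset.sup_lt_iff (WithBot.bot_lt_coe _)).2 ?_)
    intro i hi
    exact (degree_C_mul_X_pow_le _ _).trans_lt
      (by exact_mod_cast Nat.pow_lt_pow_right hq (mem_Ico.1 hi).2)

lemma monic_lubinTatePoly [Nontrivial R] (hq : 1 < q) (hh : h ≠ 0) :
    (lubinTatePoly π c q h).Monic :=
  (monic_X_pow _).add_of_right (degree_lubinTatePoly_sub_X_pow_lt hq hh)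

lemma natDegree_lubinTatePoly [Nontrivial R] (hq : 1 < q) (hh : h ≠ 0) :
    (lubinTatePoly π c q h).natDegree = q ^ h := by
  rw [lubinTatePoly, natDegree_add_eq_right_of_degree_lt (degree_lubinTatePoly_sub_X_pow_lt hq hh),
    natDegree_X_pow]

lemma eval_lubinTatePoly_add {p e : ℕ} [ExpChar R p] (hq : q = p ^ e) (a b : R) :
    (lubinTatePoly π c q h).eval (a + b) =
      (lubinTatePoly π c q h).eval a + (lubinTatePoly π c q h).eval b := by
  have hfrob (i : ℕ) : (a + b) ^ q ^ i = a ^ q ^ i + b ^ q ^ i := by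
    rw [hq, ← pow_mul, add_pow_expChar_pow]
  simp only [eval_lubinTatePoly, hfrob, mul_add, sum_add_distrib]
  ring

lemma eval_lubinTatePoly_sub {p e : ℕ} [ExpChar R p] (hq : q = p ^ e) (a b : R) :
    (lubinTatePoly π c q h).eval (a - b) =
      (lubinTatePoly π c q h).eval a - (lubinTatePoly π c q h).eval b :=
  map_sub (AddMonoidHom.mk' (lubinTatePoly π c q h).eval (eval_lubinTatePoly_add hq)) a b

end LubinTate

namespace AddValuation

variable {K : Type*} [Field K] (v : AddValuation K (WithTop ℝ)) {π : K} {c : ℕ → K} {q h : ℕ}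

lemma map_eq_of_pow_eq_neg (hπ : v π = 1) {x : K} {n : ℕ} (hx : x ^ n = -π) :
    v x = ((1 / n : ℝ) : WithTop ℝ) :=
  WithTop.eq_coe_div_of_nsmul_eq_coe one_ne_zero (by rw [← map_pow, hx, map_neg, hπ]; rfl)

lemma le_map_sum_mul_pow (hπ : v π = 1) (hc : ∀ i ∈ Ico 1 h, 0 ≤ v (c i)) {t : K}
    (ht : 0 ≤ v t) : 1 + q • v t ≤ v (∑ i ∈ Ico 1 h, π * c i * t ^ q ^ i) := by
  refine v.map_le_sum fun i hi => ?_
  rw [map_mul, map_mul, map_pow, hπ]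
  calc 1 + q • v t = 1 + 0 + q • v t := by rw [add_zero]
    _ ≤ 1 + v (c i) + q ^ i • v t := by
      gcongr
      · exact hc i hi
      · exact Nat.le_self_pow (Nat.one_le_iff_ne_zero.1 (mem_Ico.1 hi).1) q

lemma map_eval_lubinTatePoly_of_lt (hπ : v π = 1) (hc : ∀ i ∈ Ico 1 h, 0 ≤ v (c i))
    (hq : 1 < q) (hh : h ≠ 0) {t : K}
    (ht : ((1 / ((q : ℝ) ^ h - 1) : ℝ) : WithTop ℝ) < v t) :
    v ((lubinTatePoly π c q h).eval t) = 1 + v t := by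
  rcases eq_or_ne t 0 with rfl | ht0
  · simp [eval_lubinTatePoly_zero (by omega : q ≠ 0)]
  obtain ⟨s, hs⟩ := WithTop.ne_top_iff_exists.1 ((v.ne_top_iff).2 ht0)
  rw [← hs, WithTop.coe_lt_coe] at ht
  have hQ : (q : ℝ) ≤ (q : ℝ) ^ h := le_self_pow₀ (by exact_mod_cast hq.le) hh
  have hq' : (1 : ℝ) < q := by exact_mod_cast hq
  have hs1 : 1 < ((q : ℝ) ^ h - 1) * s := by
    rwa [div_lt_iff₀' (by linarith)] at ht
  have hs0 : 0 < s := pos_of_mul_pos_right (a := (q : ℝ) ^ h - 1) (by linarith) (by linarith)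
  have hπt : v (π * t) = ((1 + s : ℝ) : WithTop ℝ) := by rw [map_mul, hπ, ← hs]; rfl
  -- the linear term `π * t` strictly dominates the other two
  rw [eval_lubinTatePoly, add_assoc, map_add_eq_of_lt_left, hπt, ← hs]
  · rfl
  rw [hπt]
  refine v.map_lt_add ?_ ?_
  · refine lt_of_lt_of_le ?_ (v.le_map_sum_mul_pow hπ hc (hs ▸ WithTop.coe_nonneg.2 hs0.le))
    rw [← hs, ← WithTop.coe_nsmul, ← WithTop.coe_one, ← WithTop.coe_add, WithTop.coe_lt_coe,
      nsmul_eq_mul]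
    nlinarith
  · rw [map_pow, ← hs, ← WithTop.coe_nsmul, WithTop.coe_lt_coe, nsmul_eq_mul]
    push_cast
    linarith

lemma le_map_eval_lubinTatePoly_of_pow_eq_neg (hπ : v π = 1) (hc : ∀ i ∈ Ico 1 h, 0 ≤ v (c i))
    (hq : q ≠ 0) {x : K} (hx : x ^ (q ^ h - 1) = -π) :
    ((1 + q / ((q : ℝ) ^ h - 1) : ℝ) : WithTop ℝ) ≤ v ((lubinTatePoly π c q h).eval x) := by
  have hQ : 1 ≤ q ^ h := Nat.one_le_pow _ _ (Nat.pos_of_ne_zero hq)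
  have hvx : v x = ((1 / ((q : ℝ) ^ h - 1) : ℝ) : WithTop ℝ) := by
    rw [v.map_eq_of_pow_eq_neg hπ hx, Nat.cast_sub hQ, Nat.cast_pow, Nat.cast_one]
  have hvx0 : 0 ≤ v x := hvx ▸ WithTop.coe_nonneg.2
    (div_nonneg zero_le_one (sub_nonneg.2 (by exact_mod_cast hQ)))
  -- `x ^ q ^ h = -π * x` cancels the linear term
  have hfx : (lubinTatePoly π c q h).eval x = ∑ i ∈ Ico 1 h, π * c i * x ^ q ^ i := by
    rw [eval_lubinTatePoly, ← Nat.sub_add_cancel hQ, pow_succ, hx]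
    ring
  rw [hfx]
  refine le_trans (le_of_eq ?_) (v.le_map_sum_mul_pow hπ hc hvx0)
  rw [hvx, ← WithTop.coe_nsmul, ← WithTop.coe_one, ← WithTop.coe_add, nsmul_eq_mul, mul_one_div]

theorem exists_eval_lubinTatePoly_eq_zero_lt_map_sub [IsAlgClosed K] (hπ : v π = 1)
    (hc : ∀ i ∈ Ico 1 h, 0 ≤ v (c i)) (hq : 1 < q) (hh : h ≠ 0) {x : K}
    (hx : x ^ (q ^ h - 1) = -π) :
    ∃ y, (lubinTatePoly π c q h).eval y = 0 ∧
      ((1 / ((q : ℝ) ^ h - 1) : ℝ) : WithTop ℝ) < v (y - x) := by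
  have hq' : (1 : ℝ) < q := by exact_mod_cast hq
  have hQ : (q : ℝ) ≤ (q : ℝ) ^ h := le_self_pow₀ hq'.le hh
  have hQ1 : (0 : ℝ) < (q : ℝ) ^ h - 1 := by linarith
  have hlt : (lubinTatePoly π c q h).natDegree • ((1 / ((q : ℝ) ^ h - 1) : ℝ) : WithTop ℝ) <
      v ((lubinTatePoly π c q h).eval x) := by
    refine lt_of_lt_of_le ?_ (v.le_map_eval_lubinTatePoly_of_pow_eq_neg hπ hc (by omega) hx)
    rw [natDegree_lubinTatePoly hq hh, ← WithTop.coe_nsmul, WithTop.coe_lt_coe, nsmul_eq_mul,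
      Nat.cast_pow, mul_one_div, div_lt_iff₀ hQ1, add_mul, div_mul_cancel₀ _ hQ1.ne']
    linarith
  have hm := monic_lubinTatePoly (π := π) (c := c) hq hh
  obtain ⟨y, hy, hyx⟩ := v.exists_mem_roots_lt_map_sub hm (IsAlgClosed.splits _) x hlt
  exact ⟨y, (mem_roots hm.ne_zero).1 hy, by rwa [map_sub_swap]⟩

theorem eq_of_eval_lubinTatePoly_eq_zero {p e : ℕ} [ExpChar K p] (hqp : q = p ^ e)
    (hπ : v π = 1) (hc : ∀ i ∈ Ico 1 h, 0 ≤ v (c i)) (hq : 1 < q) (hh : h ≠ 0) {y z : K}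
    (hy : (lubinTatePoly π c q h).eval y = 0) (hz : (lubinTatePoly π c q h).eval z = 0)
    (hyz : ((1 / ((q : ℝ) ^ h - 1) : ℝ) : WithTop ℝ) < v (z - y)) : z = y := by
  have hval := v.map_eval_lubinTatePoly_of_lt hπ hc hq hh hyz
  rw [eval_lubinTatePoly_sub hqp, hy, hz, sub_zero, map_zero] at hval
  rw [← sub_eq_zero, ← v.top_iff]
  exact (WithTop.add_eq_top.1 hval.symm).resolve_left WithTop.one_ne_top

theorem le_map_sub_of_eval_lubinTatePoly_eq_zero {p e : ℕ} [ExpChar K p] (hqp : q = p ^ e)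
    (hπ : v π = 1) (hc : ∀ i ∈ Ico 1 h, 0 ≤ v (c i)) (hq : 1 < q) (hh : h ≠ 0) {x y : K}
    (hx : x ^ (q ^ h - 1) = -π) (hy : (lubinTatePoly π c q h).eval y = 0)
    (hyx : ((1 / ((q : ℝ) ^ h - 1) : ℝ) : WithTop ℝ) < v (y - x)) :
    ((q / ((q : ℝ) ^ h - 1) : ℝ) : WithTop ℝ) ≤ v (y - x) := by
  have hval := v.map_eval_lubinTatePoly_of_lt hπ hc hq hh hyx
  rw [eval_lubinTatePoly_sub hqp, hy, zero_sub, map_neg] at hval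
  have hle := v.le_map_eval_lubinTatePoly_of_pow_eq_neg hπ hc (by omega) hx
  rw [hval, WithTop.coe_add, WithTop.coe_one] at hle
  exact (WithTop.add_le_add_iff_left WithTop.one_ne_top).1 hle

end AddValuation

/-- Let `K` be an algebraically closed field of characteristic `p` with a valuation
`v : K → ℝ ∪ {∞}`.  Let `π ∈ K` with `v(π) = 1`, let `c₁, …, c_{h−1} ∈ K` with
`v(cᵢ) ≥ 0`, and set `f(X) = πX + πc₁X^q + ⋯ + πc_{h−1}X^{q^{h−1}} + X^{q^h}`.
Let `x ∈ K` satisfy `x^{q^h−1} = −π`.  Then there is exactly one root `y` of `f`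
with `v(y − x) > 1/(q^h−1)`, and this root satisfies `v(y − x) ≥ q/(q^h−1)`. -/
theorem unique_root_near_canonical_point
    (p e q h : ℕ) (hp : p.Prime) (he : 1 ≤ e) (hq : q = p ^ e) (hh : 1 ≤ h)
    (K : Type*) [Field K] [IsAlgClosed K] [CharP K p]
    (v : K → WithTop ℝ)
    (hmul : ∀ x y : K, v (x * y) = v x + v y)
    (hadd : ∀ x y : K, min (v x) (v y) ≤ v (x + y))
    (hzero : ∀ x : K, v x = ⊤ ↔ x = 0)
    (π : K) (hπ : v π = 1)
    (c : ℕ → K) (hc : ∀ i, 1 ≤ i → i ≤ h - 1 → 0 ≤ v (c i))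
    (f : K → K)
    (hf : ∀ X : K,
      f X = π * X + (∑ i ∈ Finset.Ico 1 h, π * c i * X ^ q ^ i) + X ^ q ^ h)
    (x : K) (hx : x ^ (q ^ h - 1) = -π) :
    (∃! y : K, f y = 0 ∧ ((1 / ((q : ℝ) ^ h - 1) : ℝ) : WithTop ℝ) < v (y - x))
    ∧ (∀ y : K, f y = 0 → ((1 / ((q : ℝ) ^ h - 1) : ℝ) : WithTop ℝ) < v (y - x) →
        (((q : ℝ) / ((q : ℝ) ^ h - 1) : ℝ) : WithTop ℝ) ≤ v (y - x)) := by
  have : ExpChar K p := ExpChar.prime hp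
  have hq1 : 1 < q := hq ▸ Nat.one_lt_pow (by omega) hp.one_lt
  have hv1 : v 1 = 0 := ((WithTop.add_left_inj ((hzero 1).not.2 one_ne_zero)).1
    (by rw [add_zero, ← hmul, mul_one])).symm
  let w : AddValuation K (WithTop ℝ) := AddValuation.of v ((hzero 0).2 rfl) hv1 hadd hmul
  have hcw : ∀ i ∈ Ico 1 h, 0 ≤ w (c i) := fun i hi =>
    hc i (mem_Ico.1 hi).1 (Nat.le_sub_one_of_lt (mem_Ico.1 hi).2)
  obtain rfl : f = (lubinTatePoly π c q h).eval := funext fun X => by rw [hf, eval_lubinTatePoly]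
  obtain ⟨y, hy, hyx⟩ := w.exists_eval_lubinTatePoly_eq_zero_lt_map_sub hπ hcw hq1 (by omega) hx
  refine ⟨⟨y, ⟨hy, hyx⟩, fun z ⟨hz, hzx⟩ => ?_⟩, fun z hz hzx =>
    w.le_map_sub_of_eval_lubinTatePoly_eq_zero hq hπ hcw hq1 (by omega) hx hz hzx⟩
  refine w.eq_of_eval_lubinTatePoly_eq_zero hq hπ hcw hq1 (by omega) hy hz ?_
  rw [← sub_add_sub_cancel z x y]
  exact w.map_lt_add hzx (by rwa [w.map_sub_swap])
end
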